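/- Let X be a nonempty finite type, d : X → ℝ weights with d(x) > 0, φ : X → ℝ^{n_f}, F : X → ℝ^K, H* ∈ ℝ^{n_f×K} with columns h*_1,…,h*_K, and C ≥ 0. If for every k ∈ {1,…,K} the scalar bound ‖(x ↦ ⟪φ(x), h*_k⟫) − F_k‖_d ≤ C·⨅_{h ∈ ℝ^{n_f}} ‖(x ↦ ⟪φ(x), h⟫) − F_k‖_d holds, where F_k(x) is the k-th coordinate of F(x), then the matrix bound ‖(x ↦ (H*)ᵀφ(x)) − F‖_d ≤ C·⨅_{H ∈ ℝ^{n_f×K}} ‖(x ↦ Hᵀφ(x)) − F‖_d holds. -/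

import Mathlib

/-!
The squared matrix error is the sum over `k` of the squared errors of the columns, and the
columns of `H` can be chosen independently, so the matrix infimum is at least the Euclidean
norm of the vector of column infima; the column bounds then give the claim termwise.
-/

open Finset Real

noncomputable def weightedNorm {X : Type*} [Fintype X] (d : X → ℝ) (u : X → ℝ) : ℝ :=
  √(∑ x, d x * u x ^ 2)

lemma weightedNorm_nonneg {X : Type*} [Fintype X] (d : X → ℝ) (u : X → ℝ) :
    0 ≤ weightedNorm d u :=
  sqrt_nonneg _

lemma bddBelow_range_weightedNorm {X ι : Type*} [Fintype X] (d : X → ℝ) (u : ι → X → ℝ) :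
    BddBelow (Set.range fun i => weightedNorm d (u i)) :=
  ⟨0, by rintro _ ⟨i, rfl⟩; exact weightedNorm_nonneg d (u i)⟩

lemma sqrt_sum_mul_sum_sq_eq_sqrt_sum_weightedNorm_sq {X κ : Type*} [Fintype X] [Fintype κ] {d : X → ℝ}
    (hd : ∀ x, 0 ≤ d x) (e : X → κ → ℝ) :
    √(∑ x, d x * ∑ k, e x k ^ 2) = √(∑ k, weightedNorm d (fun x => e x k) ^ 2) := by
  congr 1
  simp only [weightedNorm, sq_sqrt (sum_nonneg fun x _ => mul_nonneg (hd x) (sq_nonneg _)),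
    mul_sum]
  exact sum_comm

lemma sqrt_sum_sq_le_mul_sqrt_sum_sq {κ : Type*} [Fintype κ] {a b : κ → ℝ} {C : ℝ}
    (ha : ∀ k, 0 ≤ a k) (hab : ∀ k, a k ≤ C * b k) (hC : 0 ≤ C) :
    √(∑ k, a k ^ 2) ≤ C * √(∑ k, b k ^ 2) := by
  calc √(∑ k, a k ^ 2) ≤ √(∑ k, (C * b k) ^ 2) := by
        gcongr with k
        exacts [ha k, hab k]
    _ = C * √(∑ k, b k ^ 2) := by
        simp only [mul_pow, ← mul_sum, sqrt_mul (sq_nonneg C), sqrt_sq hC]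

theorem stmt_7_general {X : Type*} [Fintype X] {n_f K : ℕ}
    (d : X → ℝ) (hd : ∀ x, 0 < d x)
    (φ : X → Fin n_f → ℝ) (F : X → Fin K → ℝ)
    (Hstar : Matrix (Fin n_f) (Fin K) ℝ) (C : ℝ) (hC : 0 ≤ C)
    (hcol : ∀ k : Fin K,
      Real.sqrt (∑ x, d x * ((∑ i, φ x i * Hstar i k) - F x k) ^ 2)
        ≤ C * ⨅ h : Fin n_f → ℝ,
            Real.sqrt (∑ x, d x * ((∑ i, φ x i * h i) - F x k) ^ 2)) :
    Real.sqrt (∑ x, d x * ∑ k, ((∑ i, φ x i * Hstar i k) - F x k) ^ 2)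
      ≤ C * ⨅ H : Matrix (Fin n_f) (Fin K) ℝ,
          Real.sqrt (∑ x, d x * ∑ k, ((∑ i, φ x i * H i k) - F x k) ^ 2) := by
  have hd₀ : ∀ x, 0 ≤ d x := fun x => (hd x).le
  rw [sqrt_sum_mul_sum_sq_eq_sqrt_sum_weightedNorm_sq hd₀]
  calc _ ≤ C * √(∑ k, (⨅ h : Fin n_f → ℝ,
          weightedNorm d (fun x => (∑ i, φ x i * h i) - F x k)) ^ 2) :=
        sqrt_sum_sq_le_mul_sqrt_sum_sq (fun k => weightedNorm_nonneg _ _) hcol hC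
    _ ≤ _ := by
        gcongr
        refine le_ciInf fun H => ?_
        rw [sqrt_sum_mul_sum_sq_eq_sqrt_sum_weightedNorm_sq hd₀]
        gcongr with k
        · exact le_ciInf fun h => weightedNorm_nonneg _ _
        · exact ciInf_le (bddBelow_range_weightedNorm d _) (fun i => H i k)

/-- Column-wise quasi-optimality bounds imply the matrix-level
quasi-optimality bound in the weighted norm. -/
theorem stmt_7 {X : Type*} [Fintype X] [Nonempty X] {n_f K : ℕ}
    (d : X → ℝ) (hd : ∀ x, 0 < d x)
    (φ : X → Fin n_f → ℝ) (F : X → Fin K → ℝ)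
    (Hstar : Matrix (Fin n_f) (Fin K) ℝ) (C : ℝ) (hC : 0 ≤ C)
    (hcol : ∀ k : Fin K,
      Real.sqrt (∑ x, d x * ((∑ i, φ x i * Hstar i k) - F x k) ^ 2)
        ≤ C * ⨅ h : Fin n_f → ℝ,
            Real.sqrt (∑ x, d x * ((∑ i, φ x i * h i) - F x k) ^ 2)) :
    Real.sqrt (∑ x, d x * ∑ k, ((∑ i, φ x i * Hstar i k) - F x k) ^ 2)
      ≤ C * ⨅ H : Matrix (Fin n_f) (Fin K) ℝ,
          Real.sqrt (∑ x, d x * ∑ k, ((∑ i, φ x i * H i k) - F x k) ^ 2) :=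
  stmt_7_general d hd φ F Hstar C hC hcol
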